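/- Let R be a rectangle with dimensions (x,y) and let p ∈ (0,1). Then P_p(S ∩ R ∈ U_0(R)) ≤ (8p²x + 8p)^y, where U_0(R) is the collection of subsets of R that contain some member of F_0(R). -/

import Mathlib

/-!
If a spanning pair `{u, v}` for row `j` has neither of the shapes `{s, s + δ}` with `s` in row
`j` and `δ ∈ pairOffsets` (two sites of row `j` at distance at most 4, or a site of row `j` and a
site of row `j + 1` at horizontal distance 1 or 2), then the half-plane below row `j` together
with `u` and `v` is closed under the bootstrap operator, so the pair must cover the whole row.
Hence a set in `U₀(R)` contains, for every row, one of at most `8x` candidate sets (or the single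
site of the row when `x = 1`). A union bound over the choice of one candidate per row, summing
row by row from the top, gives a factor `8p²x + 8p` per row: a candidate costs `p²` unless its
upper site was already paid for by the candidate of the row above, and since that candidate has at
most two sites in row `j + 1`, this happens for at most `8` candidates, each costing `p`.
-/

open Real

def nbhd : Finset (ℤ × ℤ) := {(-2,0), (-1,0), (0,-1), (0,1), (1,0), (2,0)}

def bootOp (N : Finset (ℤ × ℤ)) (r : ℕ) (S : Set (ℤ × ℤ)) : Set (ℤ × ℤ) :=
  S ∪ {v | r ≤ (((fun n => v + n) '' (N : Set (ℤ × ℤ))) ∩ S).ncard}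

def bsClosure (N : Finset (ℤ × ℤ)) (r : ℕ) (S : Set (ℤ × ℤ)) : Set (ℤ × ℤ) :=
  ⋃ t : ℕ, (bootOp N r)^[t] S

noncomputable def rectF (a b c d : ℤ) : Finset (ℤ × ℤ) := Finset.Icc a b ×ˢ Finset.Icc c d

open Classical in
noncomputable def prob (F : Finset (ℤ × ℤ)) (p : ℝ) (E : Set (ℤ × ℤ) → Prop) : ℝ :=
  ∑ T ∈ F.powerset, if E (T : Set (ℤ × ℤ)) then p ^ T.card * (1 - p) ^ (F.card - T.card) else 0

def internallyFilled (N : Finset (ℤ × ℤ)) (r : ℕ) (R S : Set (ℤ × ℤ)) : Prop :=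
  R ⊆ bsClosure N r (S ∩ R)

def upTrav (a b c d : ℤ) (S : Set (ℤ × ℤ)) : Prop :=
  (rectF a b c d : Set (ℤ × ℤ)) ⊆
    bsClosure nbhd 3 (((rectF a b c d : Set (ℤ × ℤ)) ∩ S) ∪ (rectF a b (c-1) (c-1) : Set (ℤ × ℤ)))

def spanningPair (a b c : ℤ) (P : Set (ℤ × ℤ)) : Prop :=
  (rectF a b c c : Set (ℤ × ℤ)) ⊆ bsClosure nbhd 3 (P ∪ (rectF a b (c-1) (c-1) : Set (ℤ × ℤ)))

def F0 (a b c d : ℤ) : Set (Set (ℤ × ℤ)) :=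
  {A | A ⊆ (rectF a b c d : Set (ℤ × ℤ)) ∧ upTrav a b c d A ∧
    (∀ A' : Set (ℤ × ℤ), A' ⊂ A → ¬ upTrav a b c d A') ∧
    ∀ j : ℤ, c ≤ j → j ≤ d →
      ∃ u v : ℤ × ℤ, u ∈ A ∧ v ∈ A ∧ u ≠ v ∧ spanningPair a b j {u, v}}

def U0 (a b c d : ℤ) : Set (Set (ℤ × ℤ)) := {S | ∃ A ∈ F0 a b c d, A ⊆ S}

open Finset

section Probability

variable {F : Finset (ℤ × ℤ)} {p : ℝ}

lemma bernoulli_weight_nonneg (hp0 : 0 ≤ p) (hp1 : p ≤ 1) (k n : ℕ) :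
    0 ≤ p ^ k * (1 - p) ^ n :=
  mul_nonneg (pow_nonneg hp0 k) (pow_nonneg (sub_nonneg.2 hp1) n)

lemma prob_mono (hp0 : 0 ≤ p) (hp1 : p ≤ 1) {E E' : Set (ℤ × ℤ) → Prop}
    (h : ∀ T ⊆ F, E T → E' T) : prob F p E ≤ prob F p E' := by
  unfold prob
  refine sum_le_sum fun T hT => ?_
  split_ifs with hE hE'
  · exact le_rfl
  · exact absurd (h T (mem_powerset.1 hT) hE) hE'
  · exact bernoulli_weight_nonneg hp0 hp1 _ _
  · exact le_rfl

lemma prob_exists_le_sum {ι : Type*} (hp0 : 0 ≤ p) (hp1 : p ≤ 1) (s : Finset ι)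
    (E : ι → Set (ℤ × ℤ) → Prop) :
    prob F p (fun S => ∃ i ∈ s, E i S) ≤ ∑ i ∈ s, prob F p (E i) := by
  classical
  unfold prob
  rw [sum_comm]
  have hw := bernoulli_weight_nonneg hp0 hp1
  refine sum_le_sum fun T _ => ?_
  split_ifs with h
  · obtain ⟨i, hi, hiT⟩ := h
    exact (if_pos hiT).symm.trans_le <| single_le_sum (f := fun j => if E j T then _ else 0)
      (fun j _ => ite_nonneg (hw _ _) le_rfl) hi
  · exact sum_nonneg fun j _ => ite_nonneg (hw _ _) le_rfl

lemma prob_superset_eq {H : Finset (ℤ × ℤ)} (hHF : H ⊆ F) :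
    prob F p (fun S => ↑H ⊆ S) = p ^ #H := by
  classical
  let g : ℤ × ℤ → ℝ := fun i => if i ∈ H then 0 else 1 - p
  calc prob F p (fun S => ↑H ⊆ S)
        = ∑ T ∈ F.powerset, (∏ _ ∈ T, p) * ∏ i ∈ F \ T, g i := by
        refine sum_congr rfl fun T hT => ?_
        rw [prod_const, ← card_sdiff_of_subset (mem_powerset.1 hT)]
        split_ifs with hHT
        · rw [prod_congr rfl fun i hi =>
            (show g i = 1 - p from if_neg fun hiH => (mem_sdiff.1 hi).2 (hHT hiH)), prod_const]
        · obtain ⟨i, hiH, hiT⟩ := not_subset.1 (mt coe_subset.2 hHT)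
          rw [prod_eq_zero (mem_sdiff.2 ⟨hHF hiH, hiT⟩) (show g i = 0 from if_pos hiH),
            mul_zero]
    _ = ∏ i ∈ F, (p + g i) := (prod_add _ _ F).symm
    _ = ∏ i ∈ F, if i ∈ H then p else 1 := prod_congr rfl fun i _ => by
        simp only [g]; split_ifs <;> ring
    _ = p ^ #H := by rw [prod_ite_mem, inter_eq_right.2 hHF, prod_const]

lemma prob_superset_le (hp0 : 0 ≤ p) (H : Finset (ℤ × ℤ)) :
    prob F p (fun S => ↑H ⊆ S) ≤ p ^ #H := by
  by_cases hHF : H ⊆ F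
  · exact (prob_superset_eq hHF).le
  · have : prob F p (fun S => ↑H ⊆ S) = 0 :=
      sum_eq_zero fun T hT => if_neg fun h => hHF ((coe_subset.1 h).trans (mem_powerset.1 hT))
    exact this ▸ pow_nonneg hp0 _

lemma prob_exists_superset_le (hp0 : 0 ≤ p) (hp1 : p ≤ 1) (Hs : Finset (Finset (ℤ × ℤ))) :
    prob F p (fun S => ∃ H ∈ Hs, ↑H ⊆ S) ≤ ∑ H ∈ Hs, p ^ #H :=
  (prob_exists_le_sum hp0 hp1 Hs _).trans (sum_le_sum fun H _ => prob_superset_le hp0 H)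

end Probability

lemma mem_and_ne_of_subset_of_three_le_ncard {α : Type*} {s : Set α} {x y z : α}
    (hs : s ⊆ {x, y, z}) (h : 3 ≤ s.ncard) :
    x ∈ s ∧ y ∈ s ∧ z ∈ s ∧ x ≠ y ∧ x ≠ z ∧ y ≠ z := by
  have not_subset_pair : ∀ a b : α, ¬ s ⊆ {a, b} := fun a b hab => by
    have := (Set.ncard_le_ncard hab (Set.toFinite _)).trans (Set.ncard_insert_le a {b})
    rw [Set.ncard_singleton] at this
    omega
  have h3 : ({x, y, z} : Set α).ncard ≤ 3 :=
    (Set.ncard_insert_le _ _).trans (by grind [Set.ncard_insert_le, Set.ncard_singleton])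
  obtain rfl : s = {x, y, z} := Set.eq_of_subset_of_ncard_le hs (by omega) (Set.toFinite _)
  refine ⟨by simp, by simp, by simp, fun hxy => not_subset_pair y z ?_,
    fun hxz => not_subset_pair y z ?_, fun hyz => not_subset_pair x y ?_⟩ <;>
    subst_vars <;> simp

lemma bootOp_mono (N : Finset (ℤ × ℤ)) (r : ℕ) {S T : Set (ℤ × ℤ)} (h : S ⊆ T) :
    bootOp N r S ⊆ bootOp N r T := by
  rintro v (hv | hv)
  · exact Or.inl (h hv)
  · exact Or.inr (hv.trans (Set.ncard_le_ncard (Set.inter_subset_inter_right _ h)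
      ((N.finite_toSet.image _).inter_of_left _)))

lemma bsClosure_subset_of_bootOp_subset (N : Finset (ℤ × ℤ)) (r : ℕ) {S K : Set (ℤ × ℤ)}
    (hS : S ⊆ K) (hK : bootOp N r K ⊆ K) : bsClosure N r S ⊆ K := by
  refine Set.iUnion_subset fun t => ?_
  induction t with
  | zero => exact hS
  | succ t ih =>
    rw [Function.iterate_succ_apply']
    exact (bootOp_mono N r ih).trans hK

lemma mem_translate_nbhd_iff (w s : ℤ × ℤ) :
    s ∈ (fun n => w + n) '' (nbhd : Set (ℤ × ℤ)) ↔ s - w ∈ nbhd := by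
  rw [Set.image_add_left, Set.mem_preimage, neg_add_eq_sub, Finset.mem_coe]

def pairOffsets : Finset (ℤ × ℤ) :=
  {(1, 0), (2, 0), (3, 0), (4, 0), (-2, 1), (-1, 1), (1, 1), (2, 1)}

lemma zero_notMem_pairOffsets : (0 : ℤ × ℤ) ∉ pairOffsets := by
  decide

lemma snd_eq_zero_or_eq_one_of_mem_pairOffsets :
    ∀ δ ∈ pairOffsets, δ.2 = 0 ∨ δ.2 = 1 := by
  decide

lemma sub_mem_pairOffsets_of_mem_nbhd_erase :
    ∀ δ ∈ nbhd.erase (0, -1), ∀ δ' ∈ nbhd.erase (0, -1), δ ≠ δ' →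
      δ.2 = 0 ∧ δ' - δ ∈ pairOffsets ∨ δ'.2 = 0 ∧ δ - δ' ∈ pairOffsets := by
  decide

lemma bootOp_halfPlane_union_pair_subset {j : ℤ} {u v : ℤ × ℤ}
    (h : ∀ s ∈ ({u, v} : Set (ℤ × ℤ)), ∀ t ∈ ({u, v} : Set (ℤ × ℤ)),
      s.2 = j → t - s ∉ pairOffsets) :
    bootOp nbhd 3 ({w | w.2 < j} ∪ {u, v}) ⊆ {w | w.2 < j} ∪ {u, v} := by
  rintro w (hw | hw)
  · exact hw
  by_contra hwK
  have hjw : j ≤ w.2 := not_lt.1 fun hlt => hwK (Or.inl hlt)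
  have hsub : (fun n => w + n) '' (nbhd : Set (ℤ × ℤ)) ∩ ({w | w.2 < j} ∪ {u, v})
      ⊆ {(w.1, w.2 - 1), u, v} := by
    rintro s ⟨hsN, hs | hs⟩
    · rw [mem_translate_nbhd_iff] at hsN
      simp only [nbhd, Finset.mem_insert, Finset.mem_singleton, Prod.ext_iff, Prod.fst_sub,
        Prod.snd_sub] at hsN
      change s.2 < j at hs
      exact Or.inl (Prod.ext (by omega) (by omega))
    · exact Or.inr hs
  -- the three occupied neighbours of `w` can only be its lower neighbour, `u` and `v`
  obtain ⟨⟨-, hdown⟩, ⟨hu, -⟩, ⟨hv, -⟩, hdu, hdv, huv⟩ :=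
    mem_and_ne_of_subset_of_three_le_ncard hsub hw
  have hwj : w.2 = j := by
    rcases hdown with hdown | hdown
    · change w.2 - 1 < j at hdown; omega
    · rcases hdown with rfl | rfl <;> simp_all
  have hu' : u - w ∈ nbhd.erase (0, -1) := by
    refine mem_erase.2 ⟨fun hd => hdu ?_, (mem_translate_nbhd_iff w u).1 hu⟩
    rw [← sub_add_cancel u w, hd]; ext <;> simp [sub_eq_add_neg, add_comm]
  have hv' : v - w ∈ nbhd.erase (0, -1) := by
    refine mem_erase.2 ⟨fun hd => hdv ?_, (mem_translate_nbhd_iff w v).1 hv⟩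
    rw [← sub_add_cancel v w, hd]; ext <;> simp [sub_eq_add_neg, add_comm]
  rcases sub_mem_pairOffsets_of_mem_nbhd_erase _ hu' _ hv' (fun h' => huv (sub_left_inj.1 h'))
    with ⟨hu2, hvu⟩ | ⟨hv2, huv'⟩
  · exact h u (by simp) v (by simp) (by simp at hu2; omega) (by simpa using hvu)
  · exact h v (by simp) u (by simp) (by simp at hv2; omega) (by simpa using huv')

lemma spanningPair_cases {a b j : ℤ} {u v : ℤ × ℤ} (h : spanningPair a b j {u, v}) :
    (∃ s ∈ ({u, v} : Set (ℤ × ℤ)), ∃ t ∈ ({u, v} : Set (ℤ × ℤ)),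
      s.2 = j ∧ t - s ∈ pairOffsets) ∨ (rectF a b j j : Set (ℤ × ℤ)) ⊆ {u, v} := by
  refine or_iff_not_imp_left.2 fun hshape => ?_
  push Not at hshape
  have hclosure : bsClosure nbhd 3 ({u, v} ∪ (rectF a b (j - 1) (j - 1) : Set (ℤ × ℤ)))
      ⊆ {w | w.2 < j} ∪ {u, v} := by
    refine bsClosure_subset_of_bootOp_subset nbhd 3 ?_
      (bootOp_halfPlane_union_pair_subset hshape)
    rintro w (hw | hw)
    · exact Or.inr hw
    · simp only [rectF, coe_product, coe_Icc, Set.mem_prod, Set.mem_Icc] at hw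
      exact Or.inl (show w.2 < j by omega)
  intro w hw
  rcases hclosure (h hw) with hlt | huv
  · simp only [rectF, coe_product, coe_Icc, Set.mem_prod, Set.mem_Icc] at hw
    exact absurd hw.2.1 (not_le.2 hlt)
  · exact huv

noncomputable def rowCandidates (a b j : ℤ) : Finset (Finset (ℤ × ℤ)) :=
  if a = b then {{(a, j)}}
  else (Icc a b ×ˢ pairOffsets).image fun q => {(q.1, j), (q.1, j) + q.2}

lemma exists_rowCandidates_subset {a b j : ℤ} (hab : a ≤ b) {u v : ℤ × ℤ}
    (hu : u.1 ∈ Icc a b) (hv : v.1 ∈ Icc a b) (h : spanningPair a b j {u, v}) :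
    ∃ F ∈ rowCandidates a b j, (F : Set (ℤ × ℤ)) ⊆ {u, v} := by
  have hrow : ∀ x ∈ Icc a b, ((x, j) : ℤ × ℤ) ∈ (rectF a b j j : Set (ℤ × ℤ)) := by
    simp_all [rectF]
  unfold rowCandidates
  rcases spanningPair_cases h with ⟨s, hs, t, ht, hsj, hts⟩ | hfull <;> split_ifs with hab'
  · -- a one-column row admits no pair shape, whose two sites lie in different columns
    subst hab'
    have hs' : s.1 ∈ Icc a a := by rcases hs with rfl | rfl <;> assumption
    have ht' : t.1 ∈ Icc a a := by rcases ht with rfl | rfl <;> assumption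
    simp only [pairOffsets, mem_insert, mem_singleton, Prod.ext_iff, Prod.fst_sub] at hts
    simp only [mem_Icc] at hs' ht'
    omega
  · refine ⟨{s, t}, mem_image.2 ⟨(s.1, t - s), mem_product.2 ⟨?_, hts⟩, ?_⟩, ?_⟩
    · rcases hs with rfl | rfl <;> assumption
    · rw [show ((s.1, j) : ℤ × ℤ) = s from Prod.ext rfl hsj.symm, add_sub_cancel]
    · simp [Set.insert_subset_iff, hs, ht]
  · exact ⟨{(a, j)}, mem_singleton_self _, by simpa using hfull (hrow a (by simp [hab]))⟩
  · refine ⟨{(a, j), (a, j) + (1, 0)},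
      mem_image.2 ⟨(a, (1, 0)), by simp [pairOffsets, hab], rfl⟩, ?_⟩
    have h1 := hfull (hrow a (by simp [hab]))
    have h2 := hfull (hrow (a + 1) (by simp; omega))
    simp_all [Set.insert_subset_iff]

lemma pow_card_pair_sdiff_le {α : Type*} [DecidableEq α] {p : ℝ} (hp0 : 0 ≤ p) (hp1 : p ≤ 1)
    {U : Finset α} {s t : α} (hs : s ∉ U) (hst : s ≠ t) :
    p ^ #({s, t} \ U) ≤ p ^ 2 + if t ∈ U then p else 0 := by
  split_ifs with ht
  · have hpos : 1 ≤ #({s, t} \ U) :=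
      card_pos.2 ⟨s, mem_sdiff.2 ⟨mem_insert_self _ _, hs⟩⟩
    have := pow_le_pow_of_le_one hp0 hp1 hpos
    rw [pow_one] at this
    nlinarith
  · have hdisj : Disjoint {s, t} U := by simp [hs, ht]
    rw [sdiff_eq_self_of_disjoint hdisj, card_pair hst, add_zero]

lemma card_filter_add_mem_le {j : ℤ} (X : Finset ℤ) {U : Finset (ℤ × ℤ)}
    (hU : ∀ s ∈ U, j < s.2) (hU2 : #{s ∈ U | s.2 = j + 1} ≤ 2) :
    #{q ∈ X ×ˢ pairOffsets | (q.1, j) + q.2 ∈ U} ≤ 8 := by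
  have hvert : #{δ ∈ pairOffsets | δ.2 = 1} = 4 := by decide
  calc #{q ∈ X ×ˢ pairOffsets | (q.1, j) + q.2 ∈ U}
      ≤ #({s ∈ U | s.2 = j + 1} ×ˢ {δ ∈ pairOffsets | δ.2 = 1}) := by
        refine card_le_card_of_injOn (fun q => ((q.1, j) + q.2, q.2)) (fun q hq => ?_) ?_
        · rw [mem_coe, mem_filter, mem_product] at hq
          rw [mem_coe, mem_product, mem_filter, mem_filter]
          have hq2 := snd_eq_zero_or_eq_one_of_mem_pairOffsets _ hq.1.2
          have hrow := hU _ hq.2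
          rw [Prod.snd_add] at hrow
          refine ⟨⟨hq.2, ?_⟩, hq.1.2, ?_⟩ <;> simp only [Prod.snd_add] <;> omega
        · rintro q - q' - hqq'
          simp only [Prod.ext_iff, Prod.fst_add] at hqq'
          exact Prod.ext (by omega) (Prod.ext hqq'.2.1 hqq'.2.2)
    _ ≤ 8 := by rw [card_product, hvert]; omega

lemma sum_rowCandidates_pow_card_sdiff_le {p : ℝ} (hp0 : 0 ≤ p) (hp1 : p ≤ 1) (a b j : ℤ)
    {U : Finset (ℤ × ℤ)} (hU : ∀ s ∈ U, j < s.2) (hU2 : #{s ∈ U | s.2 = j + 1} ≤ 2) :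
    ∑ F ∈ rowCandidates a b j, p ^ #(F \ U) ≤ 8 * p ^ 2 * #(Icc a b) + 8 * p := by
  have hrow : ∀ x, ((x, j) : ℤ × ℤ) ∉ U := fun x hx => lt_irrefl j (hU _ hx)
  have hM : 0 ≤ 8 * p ^ 2 * #(Icc a b) := by positivity
  unfold rowCandidates
  split_ifs
  · rw [sum_singleton, sdiff_eq_self_of_disjoint (by simpa using hrow a), card_singleton, pow_one]
    linarith
  · calc _ ≤ ∑ q ∈ Icc a b ×ˢ pairOffsets, p ^ #({(q.1, j), (q.1, j) + q.2} \ U) :=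
          sum_image_le_of_nonneg (f := fun F => p ^ #(F \ U)) fun _ _ => pow_nonneg hp0 _
      _ ≤ ∑ q ∈ Icc a b ×ˢ pairOffsets, (p ^ 2 + if (q.1, j) + q.2 ∈ U then p else 0) :=
          sum_le_sum fun q hq => pow_card_pair_sdiff_le hp0 hp1 (hrow _) fun h =>
            zero_notMem_pairOffsets (left_eq_add.1 h ▸ (mem_product.1 hq).2)
      _ = #(Icc a b) * 8 * p ^ 2
            + #{q ∈ Icc a b ×ˢ pairOffsets | (q.1, j) + q.2 ∈ U} * p := by
          rw [sum_add_distrib, sum_const, card_product, ← sum_filter, sum_const]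
          simp [pairOffsets]
      _ ≤ 8 * p ^ 2 * #(Icc a b) + 8 * p := by
          have hbad : (#{q ∈ Icc a b ×ˢ pairOffsets | (q.1, j) + q.2 ∈ U} : ℝ) ≤ 8 := by
            exact_mod_cast card_filter_add_mem_le (Icc a b) hU hU2
          nlinarith

lemma card_le_two_of_mem_rowCandidates {a b j : ℤ} {F : Finset (ℤ × ℤ)}
    (hF : F ∈ rowCandidates a b j) : #F ≤ 2 := by
  unfold rowCandidates at hF
  split_ifs at hF
  · rw [mem_singleton.1 hF, card_singleton]; omega
  · obtain ⟨q, -, rfl⟩ := mem_image.1 hF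
    exact card_le_two

lemma snd_eq_or_eq_add_one_of_mem_rowCandidates {a b j : ℤ} {F : Finset (ℤ × ℤ)}
    (hF : F ∈ rowCandidates a b j) : ∀ s ∈ F, s.2 = j ∨ s.2 = j + 1 := by
  unfold rowCandidates at hF
  split_ifs at hF
  · simp [mem_singleton.1 hF]
  · obtain ⟨q, hq, rfl⟩ := mem_image.1 hF
    have hq2 := snd_eq_zero_or_eq_one_of_mem_pairOffsets _ (mem_product.1 hq).2
    intro s hs
    rcases mem_insert.1 hs with rfl | hs
    · exact Or.inl rfl
    · rw [mem_singleton.1 hs, Prod.snd_add]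
      omega

/-- The unions of one member of `rowCandidates a b i` for each row `i = j, …, j + m - 1`. -/
noncomputable def candidateUnions (a b : ℤ) : ℤ → ℕ → Finset (Finset (ℤ × ℤ))
  | _, 0 => {∅}
  | j, m + 1 =>
    (rowCandidates a b j ×ˢ candidateUnions a b (j + 1) m).image fun q => q.1 ∪ q.2

lemma snd_le_and_card_bottom_row_le_two_of_mem_candidateUnions {a b : ℤ} :
    ∀ {j : ℤ} {m : ℕ}, ∀ H ∈ candidateUnions a b j m,
      (∀ s ∈ H, j ≤ s.2) ∧ #{s ∈ H | s.2 = j} ≤ 2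
  | _, 0, H, hH => by simp [mem_singleton.1 hH]
  | j, m + 1, H, hH => by
    obtain ⟨⟨F, G⟩, hFG, rfl⟩ := mem_image.1 hH
    obtain ⟨hF, hG⟩ := mem_product.1 hFG
    have hFrows := snd_eq_or_eq_add_one_of_mem_rowCandidates hF
    have hGrows := (snd_le_and_card_bottom_row_le_two_of_mem_candidateUnions G hG).1
    refine ⟨fun s hs => ?_, ?_⟩
    · rcases mem_union.1 hs with hs | hs
      · rcases hFrows s hs with h | h <;> omega
      · have := hGrows s hs; omega
    · have hGj : {s ∈ G | s.2 = j} = ∅ :=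
        filter_eq_empty_iff.2 fun s hs => by have := hGrows s hs; omega
      rw [filter_union, hGj, union_empty]
      exact (card_filter_le _ _).trans (card_le_two_of_mem_rowCandidates hF)

lemma exists_candidateUnions_subset {a b : ℤ} {S : Set (ℤ × ℤ)} :
    ∀ {j : ℤ} {m : ℕ}, (∀ i, j ≤ i → i < j + m → ∃ F ∈ rowCandidates a b i, ↑F ⊆ S) →
      ∃ H ∈ candidateUnions a b j m, ↑H ⊆ S
  | _, 0, _ => ⟨∅, mem_singleton_self _, by simp⟩
  | j, m + 1, hS => by
    obtain ⟨F, hF, hFS⟩ := hS j le_rfl (by omega)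
    obtain ⟨G, hG, hGS⟩ := exists_candidateUnions_subset (j := j + 1) (m := m)
      fun i hi1 hi2 => hS i (by omega) (by push_cast at hi2 ⊢; omega)
    exact ⟨F ∪ G, mem_image.2 ⟨(F, G), mem_product.2 ⟨hF, hG⟩, rfl⟩,
      by rw [coe_union]; exact Set.union_subset hFS hGS⟩

lemma sum_candidateUnions_pow_card_le {p : ℝ} (hp0 : 0 ≤ p) (hp1 : p ≤ 1) (a b : ℤ) :
    ∀ (j : ℤ) (m : ℕ),
      ∑ H ∈ candidateUnions a b j m, p ^ #H ≤ (8 * p ^ 2 * #(Icc a b) + 8 * p) ^ m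
  | _, 0 => by simp [candidateUnions]
  | j, m + 1 => by
    set M := 8 * p ^ 2 * #(Icc a b) + 8 * p
    have hinner : ∀ G ∈ candidateUnions a b (j + 1) m,
        ∑ F ∈ rowCandidates a b j, p ^ #(F ∪ G) ≤ M * p ^ #G := fun G hG => by
      obtain ⟨hrows, hcard⟩ := snd_le_and_card_bottom_row_le_two_of_mem_candidateUnions G hG
      simp_rw [← card_sdiff_add_card, pow_add, ← sum_mul]
      exact mul_le_mul_of_nonneg_right
        (sum_rowCandidates_pow_card_sdiff_le hp0 hp1 a b j hrows hcard)
        (pow_nonneg hp0 _)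
    calc ∑ H ∈ candidateUnions a b j (m + 1), p ^ #H
        ≤ ∑ q ∈ rowCandidates a b j ×ˢ candidateUnions a b (j + 1) m, p ^ #(q.1 ∪ q.2) :=
          sum_image_le_of_nonneg (f := fun H => p ^ #H) fun _ _ => pow_nonneg hp0 _
      _ = ∑ G ∈ candidateUnions a b (j + 1) m, ∑ F ∈ rowCandidates a b j, p ^ #(F ∪ G) :=
          sum_product_right _ _ _
      _ ≤ ∑ G ∈ candidateUnions a b (j + 1) m, M * p ^ #G := sum_le_sum hinner
      _ ≤ M * M ^ m := by
          rw [← mul_sum]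
          exact mul_le_mul_of_nonneg_left (sum_candidateUnions_pow_card_le hp0 hp1 a b _ m)
            (by positivity)
      _ = M ^ (m + 1) := (pow_succ' M m).symm

lemma exists_candidateUnions_subset_of_mem_U0 {a b c d : ℤ} (hab : a ≤ b) {m : ℕ}
    (hm : (m : ℤ) = d - c + 1) {S : Set (ℤ × ℤ)} (hS : S ∈ U0 a b c d) :
    ∃ H ∈ candidateUnions a b c m, ↑H ⊆ S := by
  obtain ⟨A, ⟨hAR, -, -, hpairs⟩, hAS⟩ := hS
  have hcol : ∀ w ∈ A, w.1 ∈ Icc a b := fun w hw => (mem_product.1 (hAR hw)).1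
  refine exists_candidateUnions_subset fun i hci hid => ?_
  obtain ⟨u, v, hu, hv, -, hsp⟩ := hpairs i hci (by omega)
  obtain ⟨F, hF, hFuv⟩ := exists_rowCandidates_subset hab (hcol u hu) (hcol v hv) hsp
  exact ⟨F, hF, hFuv.trans <| Set.insert_subset (hAS hu) (Set.singleton_subset_iff.2 (hAS hv))⟩

theorem stmt9 (a b c d : ℤ) (hab : a ≤ b) (hcd : c ≤ d) (p : ℝ) (hp0 : 0 < p) (hp1 : p < 1) :
    prob (rectF a b c d) p (fun S => S ∩ (rectF a b c d : Set (ℤ × ℤ)) ∈ U0 a b c d)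
      ≤ (8*p^2*((b - a + 1 : ℤ):ℝ) + 8*p) ^ (d - c + 1) := by
  obtain ⟨m, hm⟩ : ∃ m : ℕ, (m : ℤ) = d - c + 1 :=
    ⟨(d - c + 1).toNat, Int.toNat_of_nonneg (by omega)⟩
  have hwidth : ((b - a + 1 : ℤ) : ℝ) = #(Icc a b) := by
    rw [Int.card_Icc, ← Int.cast_natCast, Int.toNat_of_nonneg (by omega)]
    ring_nf
  rw [← hm, zpow_natCast, hwidth]
  calc prob (rectF a b c d) p (fun S => S ∩ (rectF a b c d : Set (ℤ × ℤ)) ∈ U0 a b c d)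
      ≤ prob (rectF a b c d) p (fun S => ∃ H ∈ candidateUnions a b c m, ↑H ⊆ S) :=
        prob_mono hp0.le hp1.le fun T _ hT =>
          let ⟨H, hH, hHT⟩ := exists_candidateUnions_subset_of_mem_U0 hab hm hT
          ⟨H, hH, hHT.trans Set.inter_subset_left⟩
    _ ≤ ∑ H ∈ candidateUnions a b c m, p ^ #H := prob_exists_superset_le hp0.le hp1.le _
    _ ≤ _ := sum_candidateUnions_pow_card_le hp0.le hp1.le a b c m
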